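/- arXiv:2211.08175 — 6 statements merged into one kernel-verified Lean document; each statement's English description precedes it below -/
import Mathlib

section
/- Let C ⊆ ℝ³ be a strictly convex cone such that C ∩ (ℝ²×{0}) = {0}. Let M : ℝ³ → ℝ³ be a linear map such that M maps ℝ²×{0} into ℝ²×{0} and M(0,0,1) = (0,0,1). Let D ⊆ ℝ²×{0} be a strictly convex cone. Then C ∩ ker(M) = {0}, and the smallest convex cone containing M(C) ∪ D is strictly convex. -/
/-! The functional `φ v = v 2` vanishes on `D`, vanishes on `C` only at `0`, and is preserved by
`M`; hence `ker M ⊆ ker φ` meets `C` only in `0`, and `M '' C` is again a strictly convex cone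
meeting `ker φ` only in `0`. The convex cone hull of `M '' C ∪ D` is the Minkowski sum
`M '' C + D`. If `(a + b) + (a' + b') = 0` there, applying `φ` kills `b + b'`, which forces
`a + a' = 0`, hence `a = a' = 0` and then `b = b' = 0`. -/

open Set

/-- A cone: a set closed under multiplication by non-negative real scalars. -/
def IsCone {E : Type*} [AddCommGroup E] [Module ℝ E] (C : Set E) : Prop :=
  ∀ r : ℝ, 0 ≤ r → ∀ v ∈ C, r • v ∈ C

/-- A strictly convex cone: a convex cone `C` with `C ∩ (−C) = {0}`. -/
def IsStrictlyConvexCone {E : Type*} [AddCommGroup E] [Module ℝ E] (C : Set E) : Prop :=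
  IsCone C ∧ Convex ℝ C ∧ C ∩ (-C) = {0}

/-- The smallest convex cone containing a given set. -/
def coneHull {E : Type*} [AddCommGroup E] [Module ℝ E] (s : Set E) : Set E :=
  ⋂₀ {C : Set E | IsCone C ∧ Convex ℝ C ∧ s ⊆ C}

open scoped Pointwise

variable {E F : Type*} [AddCommGroup E] [Module ℝ E] [AddCommGroup F] [Module ℝ F]
  {A B C : Set E}

namespace IsCone

theorem add_mem (hC : IsCone C) (hconv : Convex ℝ C) {x y : E} (hx : x ∈ C) (hy : y ∈ C) :
    x + y ∈ C := by
  have hmid : (1 / 2 : ℝ) • x + (1 / 2 : ℝ) • y ∈ C :=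
    hconv hx hy (by norm_num) (by norm_num) (by norm_num)
  convert hC 2 (by norm_num) _ hmid using 1
  module

theorem image (hC : IsCone C) (f : E →ₗ[ℝ] F) : IsCone (f '' C) := by
  rintro r hr _ ⟨c, hc, rfl⟩
  exact ⟨r • c, hC r hr c hc, map_smul f r c⟩

theorem add (hA : IsCone A) (hB : IsCone B) : IsCone (A + B) := by
  rintro r hr _ ⟨a, ha, b, hb, rfl⟩
  exact ⟨r • a, hA r hr a ha, r • b, hB r hr b hb, (smul_add r a b).symm⟩

end IsCone

theorem coneHull_union_eq_add (hA : IsCone A) (hAconv : Convex ℝ A) (hA0 : (0 : E) ∈ A)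
    (hB : IsCone B) (hBconv : Convex ℝ B) (hB0 : (0 : E) ∈ B) :
    coneHull (A ∪ B) = A + B := by
  refine Subset.antisymm (sInter_subset_of_mem ⟨hA.add hB, hAconv.add hBconv, ?_⟩) ?_
  · rintro x (hx | hx)
    · exact ⟨x, hx, 0, hB0, add_zero x⟩
    · exact ⟨0, hA0, x, hx, zero_add x⟩
  · rintro _ ⟨a, ha, b, hb, rfl⟩ T ⟨hT, hTconv, hsub⟩
    exact hT.add_mem hTconv (hsub (Or.inl ha)) (hsub (Or.inr hb))

namespace IsStrictlyConvexCone

theorem zero_mem (hC : IsStrictlyConvexCone C) : (0 : E) ∈ C := by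
  have h : (0 : E) ∈ C ∩ -C := hC.2.2 ▸ rfl
  exact h.1

theorem eq_zero_of_add_eq_zero (hC : IsStrictlyConvexCone C) {x y : E} (hx : x ∈ C)
    (hy : y ∈ C) (hxy : x + y = 0) : x = 0 := by
  have hx' : x ∈ C ∩ -C := ⟨hx, by rwa [mem_neg, neg_eq_of_add_eq_zero_right hxy]⟩
  rwa [hC.2.2] at hx'

theorem inter_ker_eq_zero (hC : IsStrictlyConvexCone C) (φ : E →ₗ[ℝ] F)
    (hφ : C ∩ LinearMap.ker φ = {0}) (f : E →ₗ[ℝ] E) (hf : ∀ v, φ (f v) = φ v) :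
    C ∩ LinearMap.ker f = {0} := by
  refine Subset.antisymm ?_ (singleton_subset_iff.2 ⟨hC.zero_mem, Submodule.zero_mem _⟩)
  rintro v ⟨hvC, hv⟩
  have hv' : φ v = 0 := by rw [← hf, LinearMap.mem_ker.1 hv, map_zero]
  exact hφ ▸ ⟨hvC, hv'⟩

theorem image_inter_ker_eq_zero (hC : IsStrictlyConvexCone C) (φ : E →ₗ[ℝ] F)
    (hφ : C ∩ LinearMap.ker φ = {0}) (f : E →ₗ[ℝ] E) (hf : ∀ v, φ (f v) = φ v) :
    f '' C ∩ LinearMap.ker φ = {0} := by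
  refine Subset.antisymm ?_
    (singleton_subset_iff.2 ⟨⟨0, hC.zero_mem, map_zero f⟩, Submodule.zero_mem _⟩)
  rintro _ ⟨⟨c, hc, rfl⟩, hfc⟩
  have hc0 : c ∈ C ∩ LinearMap.ker φ := ⟨hc, show φ c = 0 by rw [← hf]; exact hfc⟩
  rw [hφ, mem_singleton_iff] at hc0
  rw [hc0, map_zero, mem_singleton_iff]

theorem image (hC : IsStrictlyConvexCone C) (f : E →ₗ[ℝ] F)
    (hker : C ∩ LinearMap.ker f = {0}) : IsStrictlyConvexCone (f '' C) := by
  refine ⟨hC.1.image f, hC.2.1.linear_image f, Subset.antisymm ?_ ?_⟩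
  · rintro _ ⟨⟨c, hc, rfl⟩, ⟨c', hc', hcc'⟩⟩
    have hsum : c' + c ∈ C ∩ LinearMap.ker f :=
      ⟨hC.1.add_mem hC.2.1 hc' hc, by simp [hcc']⟩
    rw [hker, mem_singleton_iff, add_comm] at hsum
    rw [mem_singleton_iff, hC.eq_zero_of_add_eq_zero hc hc' hsum, map_zero]
  · exact singleton_subset_iff.2 ⟨⟨0, hC.zero_mem, map_zero f⟩, ⟨0, hC.zero_mem, by simp⟩⟩

theorem add (hA : IsStrictlyConvexCone A) (hB : IsStrictlyConvexCone B) (φ : E →ₗ[ℝ] F)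
    (hAφ : A ∩ LinearMap.ker φ = {0}) (hBφ : B ⊆ LinearMap.ker φ) :
    IsStrictlyConvexCone (A + B) := by
  refine ⟨hA.1.add hB.1, hA.2.1.add hB.2.1, Subset.antisymm ?_ ?_⟩
  · rintro x ⟨⟨a, ha, b, hb, rfl⟩, ⟨a', ha', b', hb', hx'⟩⟩
    have hrel : (a + a') + (b + b') = 0 := by
      rw [← neg_add_cancel (a + b), ← show a' + b' = -(a + b) from hx']; abel
    have hbb' : b + b' ∈ LinearMap.ker φ := add_mem (hBφ hb) (hBφ hb')
    have haa' : a + a' ∈ A ∩ LinearMap.ker φ := by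
      refine ⟨hA.1.add_mem hA.2.1 ha ha', ?_⟩
      rw [eq_neg_of_add_eq_zero_left hrel]
      exact neg_mem hbb'
    rw [hAφ, mem_singleton_iff] at haa'
    rw [haa', zero_add] at hrel
    rw [mem_singleton_iff, hA.eq_zero_of_add_eq_zero ha ha' haa',
      hB.eq_zero_of_add_eq_zero hb hb' hrel]
    exact add_zero 0
  · exact singleton_subset_iff.2
      ⟨⟨0, hA.zero_mem, 0, hB.zero_mem, add_zero 0⟩, ⟨0, hA.zero_mem, 0, hB.zero_mem, by simp⟩⟩

end IsStrictlyConvexCone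

theorem LinearMap.apply_coord_eq_of_map_single {R ι : Type*} [Ring R] [DecidableEq ι]
    (f : (ι → R) →ₗ[R] (ι → R)) (i : ι) (hplane : ∀ v : ι → R, v i = 0 → f v i = 0)
    (hsingle : f (Pi.single i 1) = Pi.single i 1) (v : ι → R) : f v i = v i := by
  have hsplit : v = (v - v i • Pi.single i 1) + v i • Pi.single i 1 := by abel
  rw [hsplit, map_add, map_smul, hsingle, Pi.add_apply, hplane _ (by simp)]
  simp

/-- Let `C ⊆ ℝ³` be a strictly convex cone such that `C ∩ (ℝ²×{0}) = {0}`.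
Let `M : ℝ³ → ℝ³` be a linear map mapping `ℝ²×{0}` into `ℝ²×{0}` with `M(0,0,1) = (0,0,1)`.
Let `D ⊆ ℝ²×{0}` be a strictly convex cone. Then `C ∩ ker M = {0}` and the smallest
convex cone containing `M(C) ∪ D` is strictly convex. -/
theorem stmt0
    (C : Set (Fin 3 → ℝ))
    (hC : IsStrictlyConvexCone C)
    (hCplane : C ∩ {v : Fin 3 → ℝ | v 2 = 0} = {0})
    (M : (Fin 3 → ℝ) →ₗ[ℝ] (Fin 3 → ℝ))
    (hMplane : ∀ v : Fin 3 → ℝ, v 2 = 0 → (M v) 2 = 0)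
    (hMe3 : M (Pi.single (2 : Fin 3) (1 : ℝ)) = Pi.single (2 : Fin 3) (1 : ℝ))
    (D : Set (Fin 3 → ℝ))
    (hD : IsStrictlyConvexCone D)
    (hDplane : D ⊆ {v : Fin 3 → ℝ | v 2 = 0}) :
    C ∩ (LinearMap.ker M : Set (Fin 3 → ℝ)) = {0} ∧
      IsStrictlyConvexCone (coneHull (M '' C ∪ D)) := by
  set φ : (Fin 3 → ℝ) →ₗ[ℝ] ℝ := LinearMap.proj 2
  have hMφ (v : Fin 3 → ℝ) : φ (M v) = φ v := M.apply_coord_eq_of_map_single 2 hMplane hMe3 v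
  have hker : C ∩ LinearMap.ker M = {0} := hC.inter_ker_eq_zero φ hCplane M hMφ
  have hMC : IsStrictlyConvexCone (M '' C) := hC.image M hker
  have hMCφ : M '' C ∩ LinearMap.ker φ = {0} := hC.image_inter_ker_eq_zero φ hCplane M hMφ
  refine ⟨hker, ?_⟩
  rw [coneHull_union_eq_add hMC.1 hMC.2.1 hMC.zero_mem hD.1 hD.2.1 hD.zero_mem]
  exact hMC.add hD φ hMCφ hDplane
end

section
/- For any additive total order ⪯ on ℚⁿ, there exist an integer s ≥ 1 and non-zero pairwise orthogonal vectors u₁, …, u_s ∈ ℝⁿ such that d(u₁) + … + d(u_s) = n and the map ι : ℚⁿ → ℝˢ defined by ι(v) = (v·u₁, …, v·u_s) is injective and order-preserving from (ℚⁿ, ⪯) to ℝˢ equipped with the lexicographic order. -/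
/-!
By the Hahn embedding theorem, `(ℚⁿ, ⪯)` embeds into the lexicographically ordered real Hahn
series. On a nonzero subspace `W`, the coefficient at the least index occurring in the image of `W`
is a nonzero `ℚ`-linear functional `f` on `W` that is nonnegative on nonnegative vectors. As the
dot product is nondegenerate on rational subspaces, `f = (· ⬝ u)` on `W` for a real vector `u` in
the real span of `W` whose coordinates span `f(W)` over `ℚ`, so that `d(u) = dim f(W)`. Recursing
on `W ∩ ker f`, of dimension `dim W - d(u)`, gives the remaining vectors: they lie in the real span
of `ker f`, hence are orthogonal to `u`, and a nonnegative vector of `W` is either detected by `f`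
or lies in `ker f`.
-/

open HahnSeries Matrix

universe u

theorem exists_hahnSeries_embedding {G : Type u} [AddCommGroup G] (r : G → G → Prop)
    (hrefl : ∀ a, r a a) (htrans : ∀ a b c, r a b → r b c → r a c)
    (hantisymm : ∀ a b, r a b → r b a → a = b) (htotal : ∀ a b, r a b ∨ r b a)
    (hadd : ∀ a b c, r a b → r (a + c) (b + c)) :
    ∃ (Γ : Type u) (_ : LinearOrder Γ) (H : G →+ Lex ℝ⟦Γ⟧),
      Function.Injective H ∧ ∀ a b, r a b → H a ≤ H b := by
  let : LinearOrder G :=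
    { le := r, le_refl := hrefl, le_trans := htrans, le_antisymm := hantisymm,
      le_total := htotal, toDecidableLE := Classical.decRel _ }
  have : IsOrderedAddMonoid G := { add_le_add_left := fun a b h c => hadd a b c h }
  obtain ⟨H, hinj, -⟩ := hahnEmbedding_isOrderedAddMonoid G
  exact ⟨_, inferInstance, H.toAddMonoidHom, hinj, fun a b h => H.monotone' h⟩

theorem HahnSeries.coeff_nonneg_of_nonneg {Γ R : Type*} [LinearOrder Γ] [Zero R] [LinearOrder R]
    {x : Lex R⟦Γ⟧} (hx : 0 ≤ x) {γ : Γ} (hγ : ∀ γ' < γ, (ofLex x).coeff γ' = 0) :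
    0 ≤ (ofLex x).coeff γ := by
  obtain rfl | hx := hx.eq_or_lt
  · simp
  obtain ⟨i, hi, hpos⟩ := (HahnSeries.lt_iff _ _).1 hx
  simp only [ofLex_zero, HahnSeries.coeff_zero] at hi hpos
  rcases lt_trichotomy i γ with hlt | rfl | hgt
  · exact absurd (hγ i hlt) hpos.ne'
  · exact hpos.le
  · exact (hi γ hgt).le

theorem exists_nonneg_functional {G Γ : Type*} [AddCommGroup G] [Module ℚ G] [LinearOrder Γ]
    (H : G →+ Lex ℝ⟦Γ⟧) (hH : Function.Injective H) (W : Submodule ℚ G)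
    [FiniteDimensional ℚ W] (hW : W ≠ ⊥) :
    ∃ f : G →ₗ[ℚ] ℝ, (∃ w ∈ W, f w ≠ 0) ∧ ∀ w ∈ W, 0 ≤ H w → 0 ≤ f w := by
  let coeffAt (γ : Γ) : G →ₗ[ℚ] ℝ :=
    (AddMonoidHom.mk' (fun v => (ofLex (H v)).coeff γ) fun a b => by simp).toRatLinearMap
  let b := Module.finBasis ℚ W
  let T := Finset.univ.sup fun i => (ofLex (H (b i))).support
  have hT : T.IsWF := (Finset.isWF_sup _).2 fun i _ => (ofLex (H (b i))).isWF_support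
  have hTmem : ∀ γ, γ ∈ T ↔ ∃ i, coeffAt γ (b i) ≠ 0 := fun γ => by
    simp [T, Finset.sup_set_eq_biUnion, coeffAt]
  have hne : T.Nonempty := by
    have : 0 < Module.finrank ℚ W := Module.finrank_pos_iff.2 (Submodule.nontrivial_iff_ne_bot.2 hW)
    obtain ⟨γ, hγ⟩ := HahnSeries.support_nonempty_iff.2 ((map_ne_zero_iff H hH).2
      (Subtype.coe_ne_coe.2 (b.ne_zero ⟨0, this⟩)))
    exact ⟨γ, (hTmem γ).2 ⟨_, hγ⟩⟩
  let γ₀ := hT.min hne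
  have hbelow : ∀ γ < γ₀, ∀ w ∈ W, coeffAt γ w = 0 := by
    intro γ hγ w hw
    have : (coeffAt γ).domRestrict W = 0 := b.ext fun i => by
      by_contra h
      exact hT.not_lt_min hne ((hTmem γ).2 ⟨i, h⟩) hγ
    exact LinearMap.congr_fun this ⟨w, hw⟩
  refine ⟨coeffAt γ₀, ?_, fun w hw hpos => coeff_nonneg_of_nonneg hpos fun γ hγ => hbelow γ hγ w hw⟩
  obtain ⟨i, hi⟩ := (hTmem γ₀).1 (hT.min_mem hne)
  exact ⟨b i, (b i).2, hi⟩

theorem Submodule.exists_dotProduct_eq {ι K : Type*} [Fintype ι] [Field K] [LinearOrder K]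
    [IsStrictOrderedRing K] (W : Submodule K (ι → K)) (g : Module.Dual K W) :
    ∃ w : W, ∀ v : W, (v : ι → K) ⬝ᵥ w = g v := by
  let Φ : W →ₗ[K] Module.Dual K W := ((dotProductBilin K K).compl₁₂ W.subtype W.subtype).flip
  have hΦ : Function.Injective Φ := by
    refine (injective_iff_map_eq_zero Φ).2 fun w hw => Subtype.ext ?_
    exact dotProduct_self_eq_zero.1 (LinearMap.congr_fun hw w)
  obtain ⟨w, hw⟩ := (LinearMap.injective_iff_surjective_of_finrank_eq_finrank
    Subspace.dual_finrank_eq.symm).1 hΦ g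
  exact ⟨w, fun v => LinearMap.congr_fun hw v⟩

noncomputable def castVec {ι : Type*} : (ι → ℚ) →+* (ι → ℝ) := (Rat.castHom ℝ).compLeft ι

@[simp]
theorem castVec_apply {ι : Type*} (v : ι → ℚ) (k : ι) : castVec v k = v k := rfl

theorem castVec_dotProduct_castVec {ι : Type*} [Fintype ι] (v w : ι → ℚ) :
    castVec v ⬝ᵥ castVec w = ((v ⬝ᵥ w : ℚ) : ℝ) := by
  simp [dotProduct]

theorem Submodule.exists_castVec_dotProduct_eq {ι : Type*} [Fintype ι] (W : Submodule ℚ (ι → ℚ))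
    (f : (ι → ℚ) →ₗ[ℚ] ℝ) :
    ∃ u : ι → ℝ, u ∈ Submodule.span ℝ (castVec '' W) ∧ (∀ v ∈ W, castVec v ⬝ᵥ u = f v) ∧
      Submodule.span ℚ (Set.range u) = W.map f := by
  let β := Module.finBasis ℚ (W.map f)
  -- each coordinate of `f` in the `ℚ`-basis `β` of `f(W)` is a dot product with some `w j ∈ W`
  choose w hw using fun j => W.exists_dotProduct_eq ((β.coord j).comp (f.submoduleMap W))
  let u : ι → ℝ := ∑ j, (β j : ℝ) • castVec (w j : ι → ℚ)
  have hdot : ∀ v ∈ W, castVec v ⬝ᵥ u = f v := by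
    intro v hv
    calc castVec v ⬝ᵥ u = ∑ j, (v ⬝ᵥ (w j : ι → ℚ) : ℚ) • (β j : ℝ) := by
          simp [u, dotProduct_sum, castVec_dotProduct_castVec, Rat.smul_def, mul_comm]
      _ = ∑ j, β.repr (f.submoduleMap W ⟨v, hv⟩) j • (β j : ℝ) :=
          Finset.sum_congr rfl fun j _ => by rw [hw j ⟨v, hv⟩]; rfl
      _ = f v := by
          have := congrArg Subtype.val (β.sum_repr (f.submoduleMap W ⟨v, hv⟩))
          rwa [Submodule.coe_sum] at this
  refine ⟨u, ?_, hdot, le_antisymm ?_ ?_⟩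
  · exact Submodule.sum_mem _ fun j _ => Submodule.smul_mem _ _
      (Submodule.subset_span ⟨w j, (w j).2, rfl⟩)
  · rw [Submodule.span_le]
    rintro _ ⟨k, rfl⟩
    have : u k = ∑ j, (w j : ι → ℚ) k • (β j : ℝ) := by
      simp [u, castVec, Rat.smul_def, mul_comm]
    rw [this]
    exact Submodule.sum_mem _ fun j _ => Submodule.smul_mem _ _ (β j).2
  · rintro _ ⟨v, hv, rfl⟩
    rw [← hdot v hv]
    refine Submodule.sum_mem _ fun k _ => ?_
    rw [castVec_apply, ← Rat.smul_def]
    exact Submodule.smul_mem _ _ (Submodule.subset_span (Set.mem_range_self k))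

theorem Submodule.finrank_inf_ker_add_finrank_map {K V V₂ : Type*} [DivisionRing K]
    [AddCommGroup V] [Module K V] [AddCommGroup V₂] [Module K V₂] (W : Submodule K V)
    [FiniteDimensional K W] (f : V →ₗ[K] V₂) :
    Module.finrank K (W ⊓ LinearMap.ker f : Submodule K V) + Module.finrank K (W.map f) =
      Module.finrank K W := by
  have := LinearMap.finrank_range_add_finrank_ker (f.domRestrict W)
  rwa [LinearMap.range_domRestrict, LinearMap.ker_domRestrict,
    ← Submodule.finrank_map_subtype_eq, Submodule.map_comap_subtype, add_comm] at this

theorem dotProduct_eq_zero_of_mem_span {ι : Type*} [Fintype ι] {S : Set (ι → ℝ)} {u x : ι → ℝ}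
    (hS : ∀ y ∈ S, y ⬝ᵥ u = 0) (hx : x ∈ Submodule.span ℝ S) : x ⬝ᵥ u = 0 :=
  (Submodule.span_le (p := LinearMap.ker ((dotProductBilin ℝ ℝ).flip u)) |>.2 hS) hx

theorem Fin.cons_dotProduct_cons_eq_zero {ι : Type*} [Fintype ι] {s : ℕ} {u₀ : ι → ℝ}
    {u : Fin s → ι → ℝ} (h₀ : ∀ i, u i ⬝ᵥ u₀ = 0) (h : ∀ i j, i ≠ j → u i ⬝ᵥ u j = 0) :
    ∀ i j, i ≠ j → (Fin.cons u₀ u : Fin (s + 1) → ι → ℝ) i ⬝ᵥ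
      (Fin.cons u₀ u : Fin (s + 1) → ι → ℝ) j = 0 := by
  intro i j hij
  cases i using Fin.cases <;> cases j using Fin.cases
  · exact absurd rfl hij
  · simpa [dotProduct_comm] using h₀ _
  · simpa using h₀ _
  · simpa using h _ _ (fun h' => hij (congrArg Fin.succ h'))

theorem Pi.toLex_cons_pos {α : Type*} [LT α] [Zero α] {s : ℕ} {a : α} {x : Fin s → α} :
    0 < toLex (Fin.cons a x : Fin (s + 1) → α) ↔ 0 < a ∨ a = 0 ∧ 0 < toLex x := by
  show toLex (0 : Fin (s + 1) → α) < _ ↔ _ ∨ _ ∧ toLex (0 : Fin s → α) < _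
  rw [show (0 : Fin (s + 1) → α) = Fin.cons 0 0 from Matrix.cons_zero_zero.symm]
  exact Fin.pi_lex_lt_cons_cons (α := fun _ => α) (x₀ := 0) (y₀ := a) (x := 0) (y := x)
    (fun {_} => (· < ·)) |>.trans (or_congr_right (and_congr_left' eq_comm))

theorem toLex_dotProduct_lt_of_sub_pos {ι : Type*} [Fintype ι] {s : ℕ} (u : Fin s → ι → ℝ)
    {v w : ι → ℚ} (h : 0 < toLex fun i => castVec (w - v) ⬝ᵥ u i) :
    (toLex fun i => castVec v ⬝ᵥ u i) < toLex fun i => castVec w ⬝ᵥ u i := by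
  have hsub : (fun i => castVec (w - v) ⬝ᵥ u i) =
      (fun i => castVec w ⬝ᵥ u i) - fun i => castVec v ⬝ᵥ u i := by
    funext i
    simp [sub_dotProduct]
  rwa [hsub, toLex_sub, sub_pos] at h

noncomputable def rationalDim {ι : Type*} (w : ι → ℝ) : ℕ :=
  Module.finrank ℚ (Submodule.span ℚ (Set.range w))

theorem exists_orthogonal_lex_embedding {ι Γ : Type*} [Fintype ι] [LinearOrder Γ]
    (H : (ι → ℚ) →+ Lex ℝ⟦Γ⟧) (hH : Function.Injective H) (W : Submodule ℚ (ι → ℚ)) :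
    ∃ (s : ℕ) (u : Fin s → ι → ℝ), (∀ i, u i ≠ 0) ∧
      (∀ i, u i ∈ Submodule.span ℝ (castVec '' W)) ∧ (∀ i j, i ≠ j → u i ⬝ᵥ u j = 0) ∧
      ∑ i, rationalDim (u i) = Module.finrank ℚ W ∧
      ∀ v ∈ W, v ≠ 0 → 0 ≤ H v → 0 < toLex fun i => castVec v ⬝ᵥ u i := by
  induction hd : Module.finrank ℚ W using Nat.strong_induction_on generalizing W with
  | _ d ih =>
  rcases eq_or_ne W ⊥ with rfl | hW
  · refine ⟨0, Fin.elim0, fun i => i.elim0, fun i => i.elim0, fun i => i.elim0, by simp [← hd], ?_⟩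
    intro v hv hv0
    exact absurd ((Submodule.mem_bot ℚ).1 hv) hv0
  obtain ⟨f, ⟨w₀, hw₀, hfw₀⟩, hf⟩ := exists_nonneg_functional H hH W hW
  obtain ⟨u₀, hu₀W, hu₀, hdim₀⟩ := W.exists_castVec_dotProduct_eq f
  have hrank := W.finrank_inf_ker_add_finrank_map f
  have hmap : 0 < Module.finrank ℚ (W.map f) := Module.finrank_pos_iff_exists_ne_zero.2
    ⟨⟨f w₀, w₀, hw₀, rfl⟩, fun h => hfw₀ (congrArg Subtype.val h)⟩
  obtain ⟨s, u, hne, hspan, horth, hsum, hlex⟩ := ih _ (by omega) (W ⊓ LinearMap.ker f) rfl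
  refine ⟨s + 1, Fin.cons u₀ u, ?_, ?_, ?_, ?_, ?_⟩
  · refine Fin.cases ?_ hne
    rintro rfl
    exact hfw₀ (by simpa using (hu₀ w₀ hw₀).symm)
  · exact Fin.cases hu₀W fun i =>
      Submodule.span_mono (Set.image_mono inf_le_left) (hspan i)
  · refine Fin.cons_dotProduct_cons_eq_zero (fun i => ?_) horth
    refine dotProduct_eq_zero_of_mem_span ?_ (hspan i)
    rintro _ ⟨k, ⟨hkW, hkf⟩, rfl⟩
    rw [hu₀ k hkW]
    exact hkf
  · rw [Fin.sum_univ_succ, Fin.cons_zero, rationalDim, hdim₀]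
    simp only [Fin.cons_succ, hsum]
    omega
  · intro v hv hv0 hHv
    have hcons : (fun i => castVec v ⬝ᵥ (Fin.cons u₀ u : Fin (s + 1) → ι → ℝ) i) =
        Fin.cons (castVec v ⬝ᵥ u₀) fun i => castVec v ⬝ᵥ u i := by
      ext i
      cases i using Fin.cases <;> simp
    rw [hcons, Pi.toLex_cons_pos, hu₀ v hv]
    rcases (hf v hv hHv).lt_or_eq with hpos | hzero
    · exact Or.inl hpos
    · exact Or.inr ⟨hzero.symm, hlex v ⟨hv, hzero.symm⟩ hv0 hHv⟩

/-- Robbiano's theorem: for any additive total order `⪯` on `ℚⁿ` (`n ≥ 1`) there exist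
`s ≥ 1` and non-zero pairwise orthogonal vectors `u₁, …, u_s ∈ ℝⁿ` with
`d(u₁) + … + d(u_s) = n` (where `d(w)` is the dimension of the `ℚ`-vector space spanned by
the components of `w`) such that `ι(v) = (v·u₁, …, v·u_s)` is an injective order
homomorphism from `(ℚⁿ, ⪯)` to `ℝˢ` with the lexicographic order. -/
theorem stmt3 {n : ℕ} (hn : 0 < n)
    (r : (Fin n → ℚ) → (Fin n → ℚ) → Prop)
    (hrefl : ∀ a, r a a)
    (htrans : ∀ a b c, r a b → r b c → r a c)
    (hantisymm : ∀ a b, r a b → r b a → a = b)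
    (htotal : ∀ a b, r a b ∨ r b a)
    (hadd : ∀ a b c, r a b → r (a + c) (b + c)) :
    ∃ (s : ℕ) (u : Fin s → (Fin n → ℝ)),
      1 ≤ s ∧
      (∀ i, u i ≠ 0) ∧
      (∀ i j, i ≠ j → ∑ k, u i k * u j k = 0) ∧
      (∑ i, Module.finrank ℚ (Submodule.span ℚ (Set.range (u i)))) = n ∧
      Function.Injective
        (fun v : Fin n → ℚ => toLex (fun i : Fin s => ∑ k, (v k : ℝ) * u i k)) ∧
      (∀ v w : Fin n → ℚ, r v w →
        toLex (fun i : Fin s => ∑ k, (v k : ℝ) * u i k) ≤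
          toLex (fun i : Fin s => ∑ k, (w k : ℝ) * u i k)) := by
  obtain ⟨Γ, _, H, hHinj, hHmono⟩ :=
    exists_hahnSeries_embedding r hrefl htrans hantisymm htotal hadd
  obtain ⟨s, u, hne, -, horth, hdim, hpos⟩ := exists_orthogonal_lex_embedding H hHinj ⊤
  rw [finrank_top, Module.finrank_fin_fun] at hdim
  have hlt : ∀ v w, r v w → v ≠ w →
      toLex (fun i => castVec v ⬝ᵥ u i) < toLex (fun i => castVec w ⬝ᵥ u i) := by
    intro v w hvw hne
    have hHpos : 0 ≤ H (w - v) := by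
      simpa [sub_eq_add_neg] using hHmono _ _ (hadd v w (-v) hvw)
    exact toLex_dotProduct_lt_of_sub_pos u
      (hpos (w - v) Submodule.mem_top (sub_ne_zero.2 hne.symm) hHpos)
  refine ⟨s, u, ?_, hne, horth, hdim, fun v w h => ?_, fun v w hvw => ?_⟩
  · rcases Nat.eq_zero_or_pos s with rfl | hs
    · simp at hdim
      omega
    · exact hs
  · by_contra hvw
    rcases htotal v w with h' | h'
    · exact (hlt v w h' hvw).ne h
    · exact (hlt w v h' (Ne.symm hvw)).ne h.symm
  · rcases eq_or_ne v w with rfl | hne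
    · exact le_rfl
    · exact (hlt v w hvw hne).le
end

section
/- Let K be a field of characteristic 0 with algebraic closure K̄, and let I ⊆ K[x₁, …, xₙ] be an ideal such that the quotient K[x₁, …, xₙ]/I is a non-zero finite-dimensional K-vector space (I is zero-dimensional), I is radical, and I is in normal xₙ-position, meaning that any two distinct common zeros (a₁, …, aₙ) and (b₁, …, bₙ) of I in K̄ⁿ satisfy aₙ ≠ bₙ. Then there exist univariate polynomials g₁, …, g_{n−1} ∈ K[xₙ] and a squarefree polynomial gₙ ∈ K[xₙ] such that I is generated by {x₁ − g₁(xₙ), …, x_{n−1} − g_{n−1}(xₙ), gₙ(xₙ)}, and the set of common zeros of I in K̄ⁿ equals {(g₁(a), …, g_{n−1}(a), a) : a ∈ K̄, gₙ(a) = 0}. -/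
/-!
Let `A = K[x₀, …, xₙ]/I` and let `t` be the class of `xₙ`. Being reduced and finite over a
perfect field, `A` is a finite product of separable field extensions of `K`, so it has exactly
`dim_K A` embeddings into `K̄`. Normal position says that an embedding is determined by its value
at `t`, a root of the minimal polynomial `μ` of `t`; hence `dim_K A ≤ deg μ = dim_K K[t]`, so
`A = K[t]`. Writing the class of each `xᵢ` as `gᵢ(t)` and taking `gₙ = μ` (squarefree because `A`
is reduced) yields the generators, and the zero set is read off from them.
-/

open Module MvPolynomial

section Embeddings

variable {K A : Type*} [Field K] [CommRing A] [Algebra K A]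

theorem injective_sigma_algHom_comp_quotient_mkₐ (L : Type*) [Semiring L] [Nontrivial L]
    [Algebra K L] :
    Function.Injective fun φ : Σ m : MaximalSpectrum A, (A ⧸ m.asIdeal →ₐ[K] L) =>
      φ.2.comp (Ideal.Quotient.mkₐ K φ.1.asIdeal) := by
  have ker_eq (m : MaximalSpectrum A) (φ : A ⧸ m.asIdeal →ₐ[K] L) :
      RingHom.ker (φ.comp (Ideal.Quotient.mkₐ K m.asIdeal)) = m.asIdeal := by
    refine (m.isMaximal.eq_of_le (RingHom.ker_ne_top _) fun x hx => ?_).symm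
    simp [Ideal.Quotient.eq_zero_iff_mem.mpr hx]
  rintro ⟨m, φ⟩ ⟨m', ψ⟩ h
  obtain rfl : m = m' := MaximalSpectrum.ext <| by
    rw [← ker_eq m φ, ← ker_eq m' ψ]; exact congrArg _ h
  exact congrArg _ (Ideal.Quotient.algHom_ext K h)

variable [FiniteDimensional K A]

theorem natCard_algHom_eq_finrank [PerfectField K] [IsReduced A] (L : Type*) [Field L]
    [Algebra K L] [IsAlgClosed L] : Nat.card (A →ₐ[K] L) = finrank K A := by
  refine le_antisymm (card_algHom_le_finrank K A L) ?_
  have : IsArtinianRing A := .of_finite K A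
  have := Fintype.ofFinite (MaximalSpectrum A)
  let (m : MaximalSpectrum A) : Field (A ⧸ m.asIdeal) := Ideal.Quotient.field m.asIdeal
  have (m : MaximalSpectrum A) : FiniteDimensional K (A ⧸ m.asIdeal) :=
    .of_surjective (Ideal.Quotient.mkₐ K m.asIdeal).toLinearMap Ideal.Quotient.mk_surjective
  have (m : MaximalSpectrum A) : Algebra.IsSeparable K (A ⧸ m.asIdeal) :=
    Algebra.IsAlgebraic.isSeparable_of_perfectField
  calc finrank K A = ∑ m : MaximalSpectrum A, finrank K (A ⧸ m.asIdeal) := by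
        rw [((IsArtinianRing.equivPi A).restrictScalars K).toLinearEquiv.finrank_eq,
          finrank_pi_fintype]
    _ = ∑ m : MaximalSpectrum A, Nat.card (A ⧸ m.asIdeal →ₐ[K] L) := by
        simp only [AlgHom.natCard_of_splits _ _ L fun _ => IsAlgClosed.splits _]
    _ = Nat.card (Σ m : MaximalSpectrum A, (A ⧸ m.asIdeal →ₐ[K] L)) := by
        rw [Nat.card_sigma]
    _ ≤ Nat.card (A →ₐ[K] L) :=
        Nat.card_le_card_of_injective _ (injective_sigma_algHom_comp_quotient_mkₐ L)

theorem natCard_algHom_le_natDegree_minpoly (L : Type*) [Field L] [Algebra K L] {t : A}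
    (ht : Function.Injective fun φ : A →ₐ[K] L => φ t) :
    Nat.card (A →ₐ[K] L) ≤ (minpoly K t).natDegree := by
  classical
  have hμ : minpoly K t ≠ 0 := minpoly.ne_zero (.of_finite K t)
  let roots := ((minpoly K t).aroots L).toFinset
  have mem_roots (φ : A →ₐ[K] L) : φ t ∈ roots := by
    rw [Multiset.mem_toFinset, Polynomial.mem_aroots]
    exact ⟨hμ, by rw [Polynomial.aeval_algHom_apply, minpoly.aeval, map_zero]⟩
  calc Nat.card (A →ₐ[K] L) ≤ Nat.card roots :=
        Nat.card_le_card_of_injective (fun φ => ⟨φ t, mem_roots φ⟩)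
          fun φ ψ h => ht (congrArg Subtype.val h)
    _ ≤ Multiset.card ((minpoly K t).aroots L) := by
        rw [Nat.card_eq_finsetCard]; exact Multiset.toFinset_card_le _
    _ ≤ (minpoly K t).natDegree :=
        (Polynomial.card_roots' _).trans Polynomial.natDegree_map_le

theorem adjoin_singleton_eq_top_of_finrank_le {t : A}
    (h : finrank K A ≤ (minpoly K t).natDegree) : Algebra.adjoin K {t} = ⊤ := by
  refine Subalgebra.eq_of_le_of_finrank_le le_top ?_
  rwa [Subalgebra.topEquiv.toLinearEquiv.finrank_eq,
    (Algebra.adjoin.powerBasis (.of_finite K t)).finrank, Algebra.adjoin.powerBasis_dim]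

theorem aeval_surjective_of_injective_algHom_eval [PerfectField K] [IsReduced A] (L : Type*)
    [Field L] [Algebra K L] [IsAlgClosed L] {t : A}
    (ht : Function.Injective fun φ : A →ₐ[K] L => φ t) :
    Function.Surjective (Polynomial.aeval t : Polynomial K →ₐ[K] A) := by
  rw [← AlgHom.range_eq_top, ← Algebra.adjoin_singleton_eq_range_aeval]
  exact adjoin_singleton_eq_top_of_finrank_le <|
    (natCard_algHom_eq_finrank L).symm.trans_le (natCard_algHom_le_natDegree_minpoly L ht)

end Embeddings

namespace MvPolynomial

variable {σ R S : Type*} [CommRing R] [CommRing S] [Algebra R S]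

theorem algHom_sub_mem_of_forall_X {J : Ideal S} (F G : MvPolynomial σ R →ₐ[R] S)
    (h : ∀ i, F (X i) - G (X i) ∈ J) (p : MvPolynomial σ R) : F p - G p ∈ J := by
  have : (Ideal.Quotient.mkₐ R J).comp F = (Ideal.Quotient.mkₐ R J).comp G :=
    algHom_ext fun i => Ideal.Quotient.eq.mpr (h i)
  exact Ideal.Quotient.eq.mp (AlgHom.congr_fun this p)

theorem aeval_quotient_mk_X (I : Ideal (MvPolynomial σ R))
    (φ : MvPolynomial σ R ⧸ I →ₐ[R] S) :
    aeval (fun i => φ (Ideal.Quotient.mk I (X i))) = φ.comp (Ideal.Quotient.mkₐ R I) :=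
  algHom_ext fun i => by simp

theorem injective_algHom_eval_quotient_mk_X (I : Ideal (MvPolynomial σ R)) (j : σ)
    (hpos : ∀ a b : σ → S, (∀ p ∈ I, aeval a p = 0) → (∀ p ∈ I, aeval b p = 0) → a ≠ b →
      a j ≠ b j) :
    Function.Injective fun φ : MvPolynomial σ R ⧸ I →ₐ[R] S => φ (Ideal.Quotient.mk I (X j)) := by
  have zero_of_mem (φ : MvPolynomial σ R ⧸ I →ₐ[R] S) (p : MvPolynomial σ R) (hp : p ∈ I) :
      aeval (fun i => φ (Ideal.Quotient.mk I (X i))) p = 0 := by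
    simp [aeval_quotient_mk_X, Ideal.Quotient.eq_zero_iff_mem.mpr hp]
  intro φ ψ h
  by_contra hne
  refine hpos _ _ (zero_of_mem φ) (zero_of_mem ψ) (fun hab => hne ?_) h
  refine Ideal.Quotient.algHom_ext R ?_
  rw [← aeval_quotient_mk_X, ← aeval_quotient_mk_X, hab]

end MvPolynomial

section ShapeGenerators

variable {R : Type*} [CommRing R] {n : ℕ}

def shapeGenerators (g : Fin (n + 1) → Polynomial R) : Set (MvPolynomial (Fin (n + 1)) R) :=
  (Set.range fun i : Fin n =>
      X i.castSucc - Polynomial.aeval (X (Fin.last n)) (g i.castSucc)) ∪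
    {Polynomial.aeval (X (Fin.last n)) (g (Fin.last n))}

theorem span_shapeGenerators_le_ker_iff {S : Type*} [CommRing S] [Algebra R S]
    (g : Fin (n + 1) → Polynomial R) (F : MvPolynomial (Fin (n + 1)) R →ₐ[R] S) :
    Ideal.span (shapeGenerators g) ≤ RingHom.ker F ↔
      Polynomial.aeval (F (X (Fin.last n))) (g (Fin.last n)) = 0 ∧
        ∀ i : Fin n, F (X i.castSucc) = Polynomial.aeval (F (X (Fin.last n))) (g i.castSucc) := by
  simp only [Ideal.span_le, shapeGenerators, Set.union_subset_iff, Set.range_subset_iff,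
    Set.singleton_subset_iff, SetLike.mem_coe, RingHom.mem_ker, map_sub,
    ← Polynomial.aeval_algHom_apply, sub_eq_zero]
  exact and_comm

theorem eq_span_shapeGenerators (I : Ideal (MvPolynomial (Fin (n + 1)) R))
    (g : Fin (n + 1) → Polynomial R)
    (hg : ∀ i : Fin n, Ideal.Quotient.mk I (X i.castSucc) =
      Polynomial.aeval (Ideal.Quotient.mk I (X (Fin.last n))) (g i.castSucc))
    (hker : RingHom.ker (Polynomial.aeval (Ideal.Quotient.mk I (X (Fin.last n)))) =
      Ideal.span {g (Fin.last n)}) :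
    I = Ideal.span (shapeGenerators g) := by
  set J := Ideal.span (shapeGenerators g)
  set ι : Polynomial R →ₐ[R] MvPolynomial (Fin (n + 1)) R := Polynomial.aeval (X (Fin.last n))
  set ψ : MvPolynomial (Fin (n + 1)) R →ₐ[R] Polynomial R :=
    aeval (Fin.lastCases Polynomial.X fun i => g i.castSucc)
  have hJI : J ≤ I := by
    have h := (span_shapeGenerators_le_ker_iff g (Ideal.Quotient.mkₐ R I)).mpr
      ⟨by simpa [← hker] using Ideal.mem_span_singleton_self (g (Fin.last n)), by simpa using hg⟩
    simpa [SetLike.le_def, Ideal.Quotient.eq_zero_iff_mem] using h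
  -- Modulo `J` each `xᵢ` is `gᵢ(xₙ)`, so every `p` reduces to a polynomial in `xₙ` alone.
  have retract (p : MvPolynomial (Fin (n + 1)) R) : p - ι (ψ p) ∈ J := by
    refine algHom_sub_mem_of_forall_X (AlgHom.id R _) (ι.comp ψ) (fun i => ?_) p
    induction i using Fin.lastCases with
    | last => simp [ι, ψ]
    | cast i => exact Ideal.subset_span (Or.inl ⟨i, by simp [ι, ψ]⟩)
  refine le_antisymm (fun p hp => ?_) hJI
  have hψp : ψ p ∈ Ideal.span {g (Fin.last n)} := by
    have hmemI : ι (ψ p) ∈ I := by simpa using I.sub_mem hp (hJI (retract p))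
    rw [← hker, RingHom.mem_ker, ← Ideal.Quotient.mkₐ_eq_mk R, Polynomial.aeval_algHom_apply]
    simpa [Ideal.Quotient.eq_zero_iff_mem] using hmemI
  obtain ⟨q, hq⟩ := Ideal.mem_span_singleton'.mp hψp
  have hmemJ : ι (ψ p) ∈ J := by
    rw [← hq, map_mul]
    exact J.mul_mem_left _ (Ideal.subset_span (Or.inr rfl))
  simpa using J.add_mem (retract p) hmemJ

end ShapeGenerators

theorem stmt6_general {K : Type*} [Field K] [CharZero K] {n : ℕ}
    (I : Ideal (MvPolynomial (Fin (n + 1)) K))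
    (hfin : FiniteDimensional K (MvPolynomial (Fin (n + 1)) K ⧸ I))
    (hrad : I.IsRadical)
    (hpos : ∀ a b : Fin (n + 1) → AlgebraicClosure K,
      (∀ p ∈ I, aeval a p = 0) → (∀ p ∈ I, aeval b p = 0) → a ≠ b →
        a (Fin.last n) ≠ b (Fin.last n)) :
    ∃ g : Fin (n + 1) → Polynomial K,
      Squarefree (g (Fin.last n)) ∧
      I = Ideal.span
        ((Set.range fun i : Fin n =>
            X i.castSucc - Polynomial.aeval (X (Fin.last n)) (g i.castSucc)) ∪
          {Polynomial.aeval (X (Fin.last n)) (g (Fin.last n))}) ∧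
      {a : Fin (n + 1) → AlgebraicClosure K | ∀ p ∈ I, aeval a p = 0} =
        {a : Fin (n + 1) → AlgebraicClosure K |
          Polynomial.aeval (a (Fin.last n)) (g (Fin.last n)) = 0 ∧
          ∀ i : Fin n, a i.castSucc = Polynomial.aeval (a (Fin.last n)) (g i.castSucc)} := by
  have : IsReduced (MvPolynomial (Fin (n + 1)) K ⧸ I) :=
    (Ideal.isRadical_iff_quotient_reduced I).mp hrad
  set t := Ideal.Quotient.mk I (X (Fin.last n))
  have hsurj := aeval_surjective_of_injective_algHom_eval (AlgebraicClosure K)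
    (injective_algHom_eval_quotient_mk_X I (Fin.last n) hpos)
  choose G hG using fun i : Fin n => hsurj (Ideal.Quotient.mk I (X i.castSucc))
  set g : Fin (n + 1) → Polynomial K := Fin.lastCases (minpoly K t) G
  have hI : I = Ideal.span (shapeGenerators g) :=
    eq_span_shapeGenerators I g (by simp [g, hG]) (by simp [g, t])
  refine ⟨g, ?_, hI, ?_⟩
  · have hμ : minpoly K t ≠ 0 := minpoly.ne_zero (.of_finite K t)
    simpa [g] using (isRadical_iff_squarefree_of_ne_zero hμ).mp (minpoly.isRadical K t)
  · ext a
    rw [hI]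
    simpa [SetLike.le_def] using span_shapeGenerators_le_ker_iff g (aeval a)

/-- The Shape Lemma: let `K` be a field of characteristic `0`, and let
`I ⊆ K[x₀, …, xₙ]` be a zero-dimensional radical ideal (the quotient is a non-zero
finite-dimensional `K`-vector space) in normal position with respect to the last
variable (distinct common zeros in the algebraic closure differ in the last
coordinate). Then there are univariate polynomials `g₀, …, g_{n-1} ∈ K[xₙ]` and a
squarefree `gₙ ∈ K[xₙ]` such that `I` is generated by
`{x₀ − g₀(xₙ), …, x_{n−1} − g_{n−1}(xₙ), gₙ(xₙ)}`, and the set of common zeros of `I`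
in the algebraic closure is `{(g₀(a), …, g_{n−1}(a), a) : gₙ(a) = 0}`. -/
theorem stmt6 {K : Type*} [Field K] [CharZero K] {n : ℕ}
    (I : Ideal (MvPolynomial (Fin (n + 1)) K))
    (hfin : FiniteDimensional K (MvPolynomial (Fin (n + 1)) K ⧸ I))
    (hnontriv : Nontrivial (MvPolynomial (Fin (n + 1)) K ⧸ I))
    (hrad : I.IsRadical)
    (hpos : ∀ a b : Fin (n + 1) → AlgebraicClosure K,
      (∀ p ∈ I, aeval a p = 0) → (∀ p ∈ I, aeval b p = 0) → a ≠ b →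
        a (Fin.last n) ≠ b (Fin.last n)) :
    ∃ g : Fin (n + 1) → Polynomial K,
      Squarefree (g (Fin.last n)) ∧
      I = Ideal.span
        ((Set.range fun i : Fin n =>
            X i.castSucc - Polynomial.aeval (X (Fin.last n)) (g i.castSucc)) ∪
          {Polynomial.aeval (X (Fin.last n)) (g (Fin.last n))}) ∧
      {a : Fin (n + 1) → AlgebraicClosure K | ∀ p ∈ I, aeval a p = 0} =
        {a : Fin (n + 1) → AlgebraicClosure K |
          Polynomial.aeval (a (Fin.last n)) (g (Fin.last n)) = 0 ∧
          ∀ i : Fin n, a i.castSucc = Polynomial.aeval (a (Fin.last n)) (g i.castSucc)} :=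
  stmt6_general I hfin hrad hpos
end

section
/- Let F ∈ ℚ[x,y][[t]] be the unique solution of F = 1 + t(x+y)F + tΔₓF + tΔ_yF. Then, regarding all series as elements of ℚ(x,y)[[t]], one has xy(1 − tS)·F(x,y;t) = xy − t·x·F(x,0;t) − t·y·F(0,y;t), where S := x + y + 1/x + 1/y ∈ ℚ(x,y). -/
/-! Once `x` and `y` are invertible, the kernel form is a ring-theoretic linear combination:
`xy` times the functional equation plus `ty` and `tx` times the identities defining `Δₓ` and
`Δ_y`. The only other input is that substituting `x = 0` (resp. `y = 0`) in `ℚ[x,y]` and then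
embedding into `ℚ(x,y)` is the substitution `(0, y)` (resp. `(x, 0)`). -/

open MvPolynomial

noncomputable section

/-- The ring `ℚ[x,y]`, with `x = X 0` and `y = X 1`. -/
abbrev R2 : Type := MvPolynomial (Fin 2) ℚ

/-- The field `ℚ(x,y)` of rational functions. -/
abbrev K2 : Type := FractionRing R2

/-- The embedding `ℚ[x,y] → ℚ(x,y)`. -/
def φ : R2 →+* K2 := algebraMap R2 K2

/-- The substitution homomorphism `ℚ[x,y] → ℚ(x,y)`, `x ↦ a`, `y ↦ b`. -/
def sub (a b : K2) : R2 →+* K2 := eval₂Hom (φ.comp (C : ℚ →+* R2)) ![a, b]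

/-- The substitution `x ↦ 0` on `ℚ[x,y]`. -/
def subX0 : R2 →+* R2 := (aeval ![0, X 1] : R2 →ₐ[ℚ] R2).toRingHom

/-- The substitution `y ↦ 0` on `ℚ[x,y]`. -/
def subY0 : R2 →+* R2 := (aeval ![X 0, 0] : R2 →ₐ[ℚ] R2).toRingHom

theorem kernel_form {A : Type*} [CommRing A] {t x y x' y' F F0y Fx0 DxF DyF : A}
    (hx : x * x' = 1) (hy : y * y' = 1)
    (hDx : x * DxF = F - F0y) (hDy : y * DyF = F - Fx0)
    (hF : F = 1 + t * (x + y) * F + t * DxF + t * DyF) :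
    x * y * (1 - t * (x + y + x' + y')) * F = x * y - t * x * Fx0 - t * y * F0y := by
  linear_combination x * y * hF + t * y * hDx + t * x * hDy - t * y * F * hx - t * x * F * hy

theorem φ_X_ne_zero (i : Fin 2) : φ (X i) ≠ 0 :=
  (map_ne_zero_iff φ (IsFractionRing.injective R2 K2)).mpr (X_ne_zero i)

theorem φ_comp_subX0 : φ.comp subX0 = sub 0 (φ (X 1)) := by
  refine ringHom_ext (fun r => RingHom.congr_fun
    (Subsingleton.elim ((φ.comp subX0).comp C) ((sub 0 (φ (X 1))).comp C)) r) fun i => ?_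
  fin_cases i <;> simp [subX0, sub]

theorem φ_comp_subY0 : φ.comp subY0 = sub (φ (X 0)) 0 := by
  refine ringHom_ext (fun r => RingHom.congr_fun
    (Subsingleton.elim ((φ.comp subY0).comp C) ((sub (φ (X 0)) 0).comp C)) r) fun i => ?_
  fin_cases i <;> simp [subY0, sub]

theorem map_φ_map_subX0 (G : PowerSeries R2) :
    PowerSeries.map φ (PowerSeries.map subX0 G) = PowerSeries.map (sub 0 (φ (X 1))) G := by
  rw [← φ_comp_subX0, PowerSeries.map_comp, RingHom.comp_apply]

theorem map_φ_map_subY0 (G : PowerSeries R2) :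
    PowerSeries.map φ (PowerSeries.map subY0 G) = PowerSeries.map (sub (φ (X 0)) 0) G := by
  rw [← φ_comp_subY0, PowerSeries.map_comp, RingHom.comp_apply]

theorem PowerSeries.C_mul_C_inv {K : Type*} [Field K] {a : K} (ha : a ≠ 0) :
    PowerSeries.C a * PowerSeries.C a⁻¹ = 1 := by
  rw [← map_mul, mul_inv_cancel₀ ha, map_one]

/-- Let `F ∈ ℚ[x,y][[t]]` be the (unique) solution of
`F = 1 + t(x+y)F + tΔₓF + tΔ_yF`. Then, in `ℚ(x,y)[[t]]`,
`xy(1 − tS)·F(x,y;t) = xy − t·x·F(x,0;t) − t·y·F(0,y;t)` where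
`S = x + y + 1/x + 1/y`. Here `Dx` and `Dy` are the discrete derivatives,
characterized by `x·ΔₓF = F − F(0,y;t)` and `y·Δ_yF = F − F(x,0;t)`. -/
theorem stmt9
    (Dx Dy : PowerSeries R2 → PowerSeries R2)
    (hDx : ∀ G : PowerSeries R2,
      PowerSeries.C (R := R2) (X 0) * Dx G = G - PowerSeries.map subX0 G)
    (hDy : ∀ G : PowerSeries R2,
      PowerSeries.C (R := R2) (X 1) * Dy G = G - PowerSeries.map subY0 G)
    (F : PowerSeries R2)
    (hF : F = 1 + PowerSeries.X * PowerSeries.C (R := R2) (X 0 + X 1) * F +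
      PowerSeries.X * Dx F + PowerSeries.X * Dy F) :
    PowerSeries.C (R := K2) (φ (X 0) * φ (X 1)) *
        (1 - PowerSeries.X * PowerSeries.C (R := K2)
          (φ (X 0) + φ (X 1) + (φ (X 0))⁻¹ + (φ (X 1))⁻¹)) *
        PowerSeries.map φ F =
      PowerSeries.C (R := K2) (φ (X 0) * φ (X 1)) -
        PowerSeries.X * PowerSeries.C (R := K2) (φ (X 0)) *
          PowerSeries.map (sub (φ (X 0)) 0) F -
        PowerSeries.X * PowerSeries.C (R := K2) (φ (X 1)) *
          PowerSeries.map (sub 0 (φ (X 1))) F := by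
  have hDxF := congrArg (PowerSeries.map φ) (hDx F)
  have hDyF := congrArg (PowerSeries.map φ) (hDy F)
  have hFφ := congrArg (PowerSeries.map φ) hF
  simp only [map_add, map_mul, map_sub, map_one, PowerSeries.map_C, PowerSeries.map_X,
    map_φ_map_subX0, map_φ_map_subY0] at hDxF hDyF hFφ
  simp only [map_mul, map_add]
  exact kernel_form (PowerSeries.C_mul_C_inv (φ_X_ne_zero 0))
    (PowerSeries.C_mul_C_inv (φ_X_ne_zero 1)) hDxF hDyF hFφ
end
end

section
/- Let F ∈ ℚ[x,y][[t]] be the unique solution of F = 1 + t(x+y)F + tΔₓF + tΔ_yF. In the Laurent polynomial ring L := ℚ[ℤ²] (the group algebra of ℤ² over ℚ, with x^i y^j denoting the basis element indexed by (i,j) ∈ ℤ²), set S := x + y + x^{−1} + y^{−1} and R := xy − x^{−1}y + x^{−1}y^{−1} − xy^{−1}. Then for all natural numbers i, j, n, the coefficient of the monomial x^i y^j in the polynomial [tⁿ]F ∈ ℚ[x,y] equals the coefficient of x^{i+1} y^{j+1} in R·Sⁿ ∈ L. -/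
/-! Comparing coefficients of `tⁿ⁺¹` in the functional equation, the coefficient `aₙ(i, j)` of
`xⁱyʲ` in `[tⁿ]F` satisfies `aₙ₊₁(i, j) = aₙ(i-1, j) + aₙ(i, j-1) + aₙ(i+1, j) + aₙ(i, j+1)`,
where terms with a negative index are omitted. The coefficients `bₙ(p, q)` of `R·Sⁿ` satisfy the
same recurrence with no omissions. Since `S` is invariant and `R` changes sign under `x ↦ x⁻¹`
and under `y ↦ y⁻¹`, `R·Sⁿ` is odd under both reflections, so `bₙ` vanishes on the axes; hence
`(i, j) ↦ bₙ(i+1, j+1)` obeys the truncated recurrence, and agrees with `aₙ` by induction on `n`. -/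

open MvPolynomial

noncomputable section

/-- The Laurent polynomial ring `ℚ[ℤ²]`, the group algebra of `ℤ²` over `ℚ`; the
monomial `x^i y^j` is the basis element indexed by `(i, j)`. -/
abbrev LP : Type := AddMonoidAlgebra ℚ (ℤ × ℤ)

/-- The monomial `x^i y^j` of `ℚ[ℤ²]`. -/
def mono (i j : ℤ) : LP := AddMonoidAlgebra.single (i, j) (1 : ℚ)

namespace AddMonoidAlgebra

theorem coeff_eq_zero_of_domCongr_eq_neg {k G : Type*} [Ring k] [IsAddTorsionFree k]
    [AddMonoid G] (e : G ≃+ G) {A : AddMonoidAlgebra k G} (hA : domCongr ℤ k e A = -A) {g : G}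
    (hg : e g = g) : A.coeff g = 0 := by
  have h := congr(($hA).coeff g)
  rw [coeff_domCongr, ← hg, e.symm_apply_apply, hg] at h
  exact self_eq_neg.mp h

end AddMonoidAlgebra

section Laurent

open AddMonoidAlgebra

def stepS : LP := mono 1 0 + mono 0 1 + mono (-1) 0 + mono 0 (-1)

def orbitR : LP := mono 1 1 - mono (-1) 1 + mono (-1) (-1) - mono 1 (-1)

theorem coeff_mul_stepS (A : LP) (p q : ℤ) :
    (A * stepS).coeff (p, q) =
      A.coeff (p - 1, q) + A.coeff (p, q - 1) + A.coeff (p + 1, q) + A.coeff (p, q + 1) := by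
  simp only [stepS, mono, mul_add, AddMonoidAlgebra.coeff_add, Finsupp.add_apply,
    coeff_mul_single_apply, mul_one, Prod.neg_mk, Prod.mk_add_mk, neg_zero, add_zero, neg_neg,
    ← sub_eq_add_neg]

def negFst : ℤ × ℤ ≃+ ℤ × ℤ := (AddEquiv.neg ℤ).prodCongr (AddEquiv.refl ℤ)

def negSnd : ℤ × ℤ ≃+ ℤ × ℤ := (AddEquiv.refl ℤ).prodCongr (AddEquiv.neg ℤ)

@[simp]
theorem negFst_apply (p q : ℤ) : negFst (p, q) = (-p, q) := rfl

@[simp]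
theorem negSnd_apply (p q : ℤ) : negSnd (p, q) = (p, -q) := rfl

theorem domCongr_orbitR_mul_stepS_pow {e : ℤ × ℤ ≃+ ℤ × ℤ}
    (hS : domCongr ℤ ℚ e stepS = stepS) (hR : domCongr ℤ ℚ e orbitR = -orbitR) (n : ℕ) :
    domCongr ℤ ℚ e (orbitR * stepS ^ n) = -(orbitR * stepS ^ n) := by
  rw [map_mul, map_pow, hS, hR, neg_mul]

theorem coeff_orbitR_mul_stepS_pow_zero_left (n : ℕ) (q : ℤ) :
    (orbitR * stepS ^ n).coeff (0, q) = 0 := by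
  refine coeff_eq_zero_of_domCongr_eq_neg negFst (domCongr_orbitR_mul_stepS_pow ?_ ?_ n) (by simp)
  · simp only [stepS, mono, map_add, domCongr_single, negFst_apply, neg_neg, neg_zero]
    abel
  · simp only [orbitR, mono, map_add, map_sub, domCongr_single, negFst_apply, neg_neg]
    abel

theorem coeff_orbitR_mul_stepS_pow_zero_right (n : ℕ) (p : ℤ) :
    (orbitR * stepS ^ n).coeff (p, 0) = 0 := by
  refine coeff_eq_zero_of_domCongr_eq_neg negSnd (domCongr_orbitR_mul_stepS_pow ?_ ?_ n) (by simp)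
  · simp only [stepS, mono, map_add, domCongr_single, negSnd_apply, neg_neg, neg_zero]
    abel
  · simp only [orbitR, mono, map_add, map_sub, domCongr_single, negSnd_apply, neg_neg]
    abel

end Laurent

namespace MvPolynomial

variable {σ R : Type*} [CommSemiring R]

theorem coeff_aeval_update_X_zero_of_ne_zero [DecidableEq σ] (k : σ) (P : MvPolynomial σ R)
    {m : σ →₀ ℕ} (hm : m k ≠ 0) :
    coeff m (aeval (Function.update (X : σ → MvPolynomial σ R) k 0) P) = 0 := by
  induction P using MvPolynomial.induction_on generalizing m with
  | C a =>
    rw [aeval_C, algebraMap_eq, coeff_C, if_neg]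
    rintro rfl
    exact hm rfl
  | add p q hp hq => rw [map_add, coeff_add, hp hm, hq hm, add_zero]
  | mul_X p i hp =>
    rw [map_mul, aeval_X]
    by_cases hi : i = k
    · rw [hi, Function.update_self, mul_zero, coeff_zero]
    · rw [Function.update_of_ne hi, coeff_mul_X']
      split_ifs
      · exact hp (by simpa [Finsupp.single_apply, hi] using hm)
      · rfl

theorem coeff_X_mul_of_apply_eq_zero (k : σ) (P : MvPolynomial σ R) {m : σ →₀ ℕ} (hm : m k = 0) :
    coeff m (X k * P) = 0 := by
  classical
  rw [coeff_X_mul', if_neg (Finsupp.notMem_support_iff.mpr hm)]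

end MvPolynomial

theorem coeff_subX0_of_ne_zero (P : R2) {m : Fin 2 →₀ ℕ} (hm : m 0 ≠ 0) :
    coeff m (subX0 P) = 0 := by
  have h : (![0, X 1] : Fin 2 → R2) = Function.update X 0 0 := by
    funext i
    fin_cases i <;> rfl
  change coeff m (aeval ![0, X 1] P) = 0
  rw [h]
  exact coeff_aeval_update_X_zero_of_ne_zero 0 P hm

theorem coeff_subY0_of_ne_zero (P : R2) {m : Fin 2 →₀ ℕ} (hm : m 1 ≠ 0) :
    coeff m (subY0 P) = 0 := by
  have h : (![X 0, 0] : Fin 2 → R2) = Function.update X 1 0 := by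
    funext i
    fin_cases i <;> rfl
  change coeff m (aeval ![X 0, 0] P) = 0
  rw [h]
  exact coeff_aeval_update_X_zero_of_ne_zero 1 P hm

namespace PowerSeries

theorem coeff_coeff_of_C_X_mul_eq_sub_map {σ R : Type*} [CommRing R] (k : σ)
    {φ : MvPolynomial σ R →+* MvPolynomial σ R}
    (hφ : ∀ P m, m k ≠ 0 → MvPolynomial.coeff m (φ P) = 0)
    {G D : PowerSeries (MvPolynomial σ R)} (h : C (MvPolynomial.X k) * D = G - map φ G) (n : ℕ)
    (m : σ →₀ ℕ) :
    MvPolynomial.coeff m (coeff n D) = MvPolynomial.coeff (Finsupp.single k 1 + m) (coeff n G) := by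
  have h' := congr(MvPolynomial.coeff (Finsupp.single k 1 + m) (coeff n $h))
  rwa [coeff_C_mul, MvPolynomial.coeff_X_mul, map_sub, coeff_map, MvPolynomial.coeff_sub,
    hφ _ _ (by simp), sub_zero] at h'

variable {A : Type*} [CommSemiring A] {F G H : PowerSeries A} {a : A}

theorem coeff_zero_of_eq_one_add_X_mul (hF : F = 1 + X * C a * F + X * G + X * H) :
    coeff 0 F = 1 := by
  rw [hF]
  simp [coeff_zero_eq_constantCoeff]

theorem coeff_succ_of_eq_one_add_X_mul (hF : F = 1 + X * C a * F + X * G + X * H) (n : ℕ) :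
    coeff (n + 1) F = a * coeff n F + coeff n G + coeff n H := by
  conv_lhs => rw [hF]
  rw [map_add, map_add, map_add, mul_assoc, coeff_succ_X_mul, coeff_succ_X_mul, coeff_succ_X_mul,
    coeff_C_mul, coeff_one, if_neg n.succ_ne_zero, zero_add]

end PowerSeries

section PositivePart

open Finsupp

theorem single_succ_add_single (i j : ℕ) :
    (single 0 (i + 1) + single 1 j : Fin 2 →₀ ℕ) = single 0 1 + (single 0 i + single 1 j) := by
  rw [← add_assoc, ← single_add, add_comm 1 i]

theorem single_add_single_succ (i j : ℕ) :
    (single 0 i + single 1 (j + 1) : Fin 2 →₀ ℕ) = single 1 1 + (single 0 i + single 1 j) := by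
  rw [add_left_comm, ← single_add, add_comm 1 j]

/-- `xy·P = [x^> y^>] A`. -/
def IsShiftedPosPart (P : R2) (A : LP) : Prop :=
  ∀ i j : ℕ, coeff (single 0 i + single 1 j) P = A.coeff ((i : ℤ) + 1, (j : ℤ) + 1)

namespace IsShiftedPosPart

variable {P : R2} {A : LP}

theorem coeff_X_zero_mul (hP : IsShiftedPosPart P A) (hA : ∀ q, A.coeff (0, q) = 0) (i j : ℕ) :
    coeff (single 0 i + single 1 j) (X 0 * P) = A.coeff (i, (j : ℤ) + 1) := by
  cases i with
  | zero => rw [coeff_X_mul_of_apply_eq_zero _ _ (by simp), Nat.cast_zero, hA]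
  | succ i => rw [single_succ_add_single, coeff_X_mul, hP, Nat.cast_succ]

theorem coeff_X_one_mul (hP : IsShiftedPosPart P A) (hA : ∀ p, A.coeff (p, 0) = 0) (i j : ℕ) :
    coeff (single 0 i + single 1 j) (X 1 * P) = A.coeff ((i : ℤ) + 1, j) := by
  cases j with
  | zero => rw [coeff_X_mul_of_apply_eq_zero _ _ (by simp), Nat.cast_zero, hA]
  | succ j => rw [single_add_single_succ, coeff_X_mul, hP, Nat.cast_succ]

end IsShiftedPosPart

theorem isShiftedPosPart_one_orbitR : IsShiftedPosPart 1 orbitR := by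
  intro i j
  have hij : (0 = single (0 : Fin 2) i + single 1 j) ↔ (i = 0 ∧ j = 0) := by
    rw [eq_comm, add_eq_zero, single_eq_zero, single_eq_zero]
  simp only [coeff_one, orbitR, mono, AddMonoidAlgebra.coeff_add, AddMonoidAlgebra.coeff_sub,
    Finsupp.add_apply, Finsupp.sub_apply, AddMonoidAlgebra.coeff_single, Finsupp.single_apply,
    Prod.mk.injEq, hij]
  split_ifs <;> first | omega | norm_num

theorem isShiftedPosPart_of_recurrence (f dx dy : ℕ → R2) (h0 : f 0 = 1)
    (hsucc : ∀ n, f (n + 1) = (X 0 + X 1) * f n + dx n + dy n)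
    (hdx : ∀ n m, coeff m (dx n) = coeff (single 0 1 + m) (f n))
    (hdy : ∀ n m, coeff m (dy n) = coeff (single 1 1 + m) (f n)) (n : ℕ) :
    IsShiftedPosPart (f n) (orbitR * stepS ^ n) := by
  induction n with
  | zero => rw [h0, pow_zero, mul_one]; exact isShiftedPosPart_one_orbitR
  | succ n ih =>
    intro i j
    rw [hsucc, add_mul, coeff_add, coeff_add, coeff_add,
      ih.coeff_X_zero_mul (coeff_orbitR_mul_stepS_pow_zero_left n),
      ih.coeff_X_one_mul (coeff_orbitR_mul_stepS_pow_zero_right n), hdx, hdy,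
      ← single_succ_add_single, ← single_add_single_succ, ih, ih,
      pow_succ, ← mul_assoc, coeff_mul_stepS]
    push_cast
    ring_nf

end PositivePart

/-- Let `F ∈ ℚ[x,y][[t]]` be the (unique) solution of
`F = 1 + t(x+y)F + tΔₓF + tΔ_yF`. With `S = x + y + x⁻¹ + y⁻¹` and
`R = xy − x⁻¹y + x⁻¹y⁻¹ − xy⁻¹` in the Laurent polynomial ring `ℚ[ℤ²]`, the
coefficient of `x^i y^j` in `[tⁿ]F` equals the coefficient of `x^{i+1} y^{j+1}` in
`R·Sⁿ`, for all `i, j, n ∈ ℕ`. (This is the statement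
`xyF(x,y) = [x^> y^>] (xy − x⁻¹y + x⁻¹y⁻¹ − xy⁻¹)/(1 − tS)`, coefficientwise.)
Here `Dx` and `Dy` are the discrete derivatives, characterized by
`x·ΔₓF = F − F(0,y;t)` and `y·Δ_yF = F − F(x,0;t)`. -/
theorem stmt11
    (Dx Dy : PowerSeries R2 → PowerSeries R2)
    (hDx : ∀ G : PowerSeries R2,
      PowerSeries.C (R := R2) (X 0) * Dx G = G - PowerSeries.map subX0 G)
    (hDy : ∀ G : PowerSeries R2,
      PowerSeries.C (R := R2) (X 1) * Dy G = G - PowerSeries.map subY0 G)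
    (F : PowerSeries R2)
    (hF : F = 1 + PowerSeries.X * PowerSeries.C (R := R2) (X 0 + X 1) * F +
      PowerSeries.X * Dx F + PowerSeries.X * Dy F)
    (S R : LP)
    (hS : S = mono 1 0 + mono 0 1 + mono (-1) 0 + mono 0 (-1))
    (hR : R = mono 1 1 - mono (-1) 1 + mono (-1) (-1) - mono 1 (-1)) :
    ∀ i j n : ℕ,
      MvPolynomial.coeff (Finsupp.single 0 i + Finsupp.single 1 j)
          (PowerSeries.coeff (R := R2) n F) =
        (R * S ^ n).coeff ((i : ℤ) + 1, (j : ℤ) + 1) := by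
  intro i j n
  subst hS hR
  exact isShiftedPosPart_of_recurrence (fun n ↦ PowerSeries.coeff n F)
    (fun n ↦ PowerSeries.coeff n (Dx F)) (fun n ↦ PowerSeries.coeff n (Dy F))
    (PowerSeries.coeff_zero_of_eq_one_add_X_mul hF)
    (PowerSeries.coeff_succ_of_eq_one_add_X_mul hF)
    (PowerSeries.coeff_coeff_of_C_X_mul_eq_sub_map 0 (fun P _ ↦ coeff_subX0_of_ne_zero P) (hDx F))
    (PowerSeries.coeff_coeff_of_C_X_mul_eq_sub_map 1 (fun P _ ↦ coeff_subY0_of_ne_zero P) (hDy F))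
    n i j
end
end

section
/- Let K be a field containing the rational function field ℚ(x,y) in two variables (so that x and y are invertible in K), and let α ∈ K satisfy α² = 4x³y² + (x + y + xy + xy²)². For i ∈ {1, −1} set pᵢ(α) := (x + y + xy + xy² + iα)/(2x²y). Then p₁(α)·p₋₁(α) = −1/x (in particular pᵢ(α) ≠ 0 and is invertible in K), and for i ∈ {1, −1}, S₀(pᵢ(α), y)·S₁(pᵢ(α), y) = S₀(x, y)·S₁(x, y), where S₀(u,v) := v/u + v + u + 1 and S₁(u,v) := 1/(uv) + 1. -/
/-!
For `i = ±1`, `pᵢ(α)` is a root of the quadratic `x²y·u² − (x + y + xy + xy²)·u − xy`, whose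
discriminant is `α²`; Vieta's formula gives `p₁ p₋₁ = −xy / x²y = −1/x`. On the other hand
`S₀S₁(u, y) − S₀S₁(x, y)` factors as `(u − x)` times this quadratic, divided by `x²y u²`,
so every nonzero root `u` leaves the kernel polynomial unchanged.
-/

open MvPolynomial

noncomputable section

section Quadratic
variable {K : Type*} [Field K] [NeZero (2 : K)] {a b c s : K}

theorem quadratic_eq_zero_of_sign_root (ha : a ≠ 0) (h : discrim a b c = s * s) {i : K}
    (hi : i = 1 ∨ i = -1) :
    a * ((-b + i * s) / (2 * a) * ((-b + i * s) / (2 * a))) + b * ((-b + i * s) / (2 * a)) + c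
      = 0 := by
  refine (quadratic_eq_zero_iff ha h _).mpr ?_
  rcases hi with rfl | rfl
  · exact .inl (by ring)
  · exact .inr (by ring)

theorem quadratic_root_mul_root (ha : a ≠ 0) (h : discrim a b c = s * s) :
    (-b + s) / (2 * a) * ((-b - s) / (2 * a)) = c / a := by
  rw [discrim] at h
  field_simp
  linear_combination h

end Quadratic

section Kernel
variable {K : Type*} [Field K]

-- The kernel polynomial `S₀ S₁` of the paper, as a rational function of `u` and `v`.
def kernelPoly (u v : K) : K := (v / u + v + u + 1) * (1 / (u * v) + 1)

theorem kernelPoly_sub_kernelPoly {x y u : K} (hx : x ≠ 0) (hy : y ≠ 0) (hu : u ≠ 0) :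
    kernelPoly u y - kernelPoly x y =
      (u - x) * (x ^ 2 * y * (u * u) + -(x + y + x * y + x * y ^ 2) * u + -(x * y)) /
        (x ^ 2 * y * u ^ 2) := by
  unfold kernelPoly
  field_simp
  ring

theorem kernelPoly_eq_kernelPoly_of_root {x y u : K} (hx : x ≠ 0) (hy : y ≠ 0) (hu : u ≠ 0)
    (h : x ^ 2 * y * (u * u) + -(x + y + x * y + x * y ^ 2) * u + -(x * y) = 0) :
    kernelPoly u y = kernelPoly x y := by
  rw [← sub_eq_zero, kernelPoly_sub_kernelPoly hx hy hu, h, mul_zero, zero_div]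

end Kernel

/-- Let `K` be a field containing `ℚ(x,y)` (via an embedding `f`), and let `α ∈ K`
satisfy `α² = 4x³y² + (x + y + xy + xy²)²`. For `i ∈ {1,−1}` set
`pᵢ(α) = (x + y + xy + xy² + iα)/(2x²y)`. Then `p₁(α)·p₋₁(α) = −1/x` (in particular
`pᵢ(α) ≠ 0`), and the kernel polynomial is invariant under `x ↦ pᵢ(α)`:
`S₀(pᵢ(α), y)·S₁(pᵢ(α), y) = S₀(x, y)·S₁(x, y)` for `i ∈ {1,−1}`, where
`S₀(u,v) = v/u + v + u + 1` and `S₁(u,v) = 1/(uv) + 1`. -/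
theorem stmt13 {K : Type*} [Field K] (f : K2 →+* K)
    (x y : K) (hx : x = f (φ (X 0))) (hy : y = f (φ (X 1)))
    (α : K) (hα : α ^ 2 = 4 * x ^ 3 * y ^ 2 + (x + y + x * y + x * y ^ 2) ^ 2)
    (p : K → K) (hp : ∀ i : K, p i = (x + y + x * y + x * y ^ 2 + i * α) / (2 * x ^ 2 * y)) :
    p 1 * p (-1) = -x⁻¹ ∧
    (∀ i : K, i = 1 ∨ i = -1 → p i ≠ 0) ∧
    (∀ i : K, i = 1 ∨ i = -1 →
      (y / p i + y + p i + 1) * (1 / (p i * y) + 1) =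
        (y / x + y + x + 1) * (1 / (x * y) + 1)) := by
  have : CharZero K := (RingHom.charZero_iff f.injective).mp inferInstance
  have hx0 : x ≠ 0 := hx ▸ (map_ne_zero f).mpr (φ_X_ne_zero 0)
  have hy0 : y ≠ 0 := hy ▸ (map_ne_zero f).mpr (φ_X_ne_zero 1)
  have ha : x ^ 2 * y ≠ 0 := mul_ne_zero (pow_ne_zero 2 hx0) hy0
  have hdisc : discrim (x ^ 2 * y) (-(x + y + x * y + x * y ^ 2)) (-(x * y)) = α * α := by
    rw [discrim]
    linear_combination -hα
  have hroot : ∀ i, p i = (-(-(x + y + x * y + x * y ^ 2)) + i * α) / (2 * (x ^ 2 * y)) := by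
    intro i
    rw [hp, neg_neg, mul_assoc]
  have hprod : p 1 * p (-1) = -x⁻¹ := by
    rw [hroot, hroot, one_mul, neg_one_mul, ← sub_eq_add_neg, quadratic_root_mul_root ha hdisc]
    field_simp
  have hne : ∀ i : K, i = 1 ∨ i = -1 → p i ≠ 0 := by
    have : p 1 * p (-1) ≠ 0 := hprod ▸ neg_ne_zero.mpr (inv_ne_zero hx0)
    rintro i (rfl | rfl)
    exacts [left_ne_zero_of_mul this, right_ne_zero_of_mul this]
  refine ⟨hprod, hne, fun i hi => ?_⟩
  refine kernelPoly_eq_kernelPoly_of_root hx0 hy0 (hne i hi) ?_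
  rw [hroot]
  exact quadratic_eq_zero_of_sign_root ha hdisc hi
end
end
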